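/- Let Π_α be the probability distribution on ℝᵈ with density p_α(x) = e^{-‖x‖^α}/Z_α for α ≥ 2. For ρ > 0, the probability of the ball B(0, ρ) equals P(X ≤ ρ^α) where X ∼ Gamma(d/α, 1). Consequently, defining τ(s) = (1/α + log(1/s)/d + √(2 log(1/s)/(dα)))^{1/α}, the ball of radius τ(s)·d^{1/α} satisfies Π_α(B(0, τ(s)d^{1/α})) ≥ 1 - s for every s ∈ (0,1). -/

import Mathlib

/-!
Under `Π_α` the variable `‖x‖ ^ α` is `Gamma(d/α, 1)`-distributed: in polar coordinates the radius
`r = ‖x‖` has density proportional to `r ^ (d - 1) * exp (-r ^ α)`, and the substitution `t = r ^ α`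
turns this into `t ^ (d/α - 1) * exp (-t)`. With `t = log (1/s)` the ball of radius `τ(s) d^(1/α)`
is the event `‖x‖ ^ α ≤ k + t + √(2 k t)`, `k = d/α`. Its complement has probability at most
`exp (-t) = s` by the Chernoff bound with the Gamma moment generating function `(1 - λ) ^ (-k)`,
taken at `λ = σ / (1 + σ)` for `σ = √(2t/k)`, and `log (1 + σ) ≤ σ (2 + σ) / (2 (1 + σ))`.
-/

open MeasureTheory ProbabilityTheory Real Set Module Metric

lemma MeasureTheory.measureReal_withDensity_ofReal {X : Type*} [MeasurableSpace X]
    {μ : Measure X} {f : X → ℝ} {s : Set X} (hs : MeasurableSet s) (hf : IntegrableOn f s μ)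
    (hf0 : ∀ x ∈ s, 0 ≤ f x) :
    (μ.withDensity fun x => ENNReal.ofReal (f x)).real s = ∫ x in s, f x ∂μ := by
  rw [measureReal_def, withDensity_apply _ hs, ← ofReal_integral_eq_lintegral_ofReal hf
    ((ae_restrict_iff' hs).mpr (ae_of_all _ hf0)),
    ENNReal.toReal_ofReal (setIntegral_nonneg hs hf0)]

lemma Real.log_le_sub_inv_div_two {x : ℝ} (hx : 1 ≤ x) : log x ≤ (x - x⁻¹) / 2 := by
  rw [← sinh_log (by linarith)]
  exact self_le_sinh_iff.mpr (log_nonneg hx)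

namespace ProbabilityTheory

variable {a r : ℝ}

lemma measurable_gammaPDF (a r : ℝ) : Measurable (gammaPDF a r) :=
  (measurable_gammaPDFReal a r).ennreal_ofReal

lemma toReal_gammaPDF (ha : 0 < a) (hr : 0 < r) (x : ℝ) :
    (gammaPDF a r x).toReal = gammaPDFReal a r x :=
  ENNReal.toReal_ofReal (gammaPDFReal_nonneg ha hr x)

lemma integrable_gammaPDFReal (ha : 0 < a) (hr : 0 < r) : Integrable (gammaPDFReal a r) := by
  have := integrable_toReal_of_lintegral_ne_top (measurable_gammaPDF a r).aemeasurable
    (by rw [lintegral_gammaPDF_eq_one ha hr]; exact ENNReal.one_ne_top)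
  simpa only [toReal_gammaPDF ha hr] using this

lemma integral_gammaPDFReal (ha : 0 < a) (hr : 0 < r) : ∫ x, gammaPDFReal a r x = 1 := by
  rw [integral_eq_lintegral_of_nonneg_ae (ae_of_all _ (gammaPDFReal_nonneg ha hr))
    (measurable_gammaPDFReal a r).aestronglyMeasurable]
  exact congrArg ENNReal.toReal (lintegral_gammaPDF_eq_one ha hr)

lemma gammaPDFReal_mul_exp {l : ℝ} (hr : 0 < r) (hl : l < r) (x : ℝ) :
    gammaPDFReal a r x * exp (l * x) = (r / (r - l)) ^ a * gammaPDFReal a (r - l) x := by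
  have hrl : 0 < r - l := sub_pos.mpr hl
  unfold gammaPDFReal
  split_ifs
  · rw [div_rpow hr.le hrl.le]
    have : exp (-(r * x)) * exp (l * x) = exp (-((r - l) * x)) := by rw [← exp_add]; ring_nf
    rw [mul_assoc, this]
    field_simp
  · simp

lemma integrable_exp_mul_gammaMeasure {l : ℝ} (ha : 0 < a) (hr : 0 < r) (hl : l < r) :
    Integrable (fun x => exp (l * x)) (gammaMeasure a r) := by
  rw [gammaMeasure, integrable_withDensity_iff_integrable_smul'
    (measurable_gammaPDF a r) (ae_of_all _ fun _ => ENNReal.ofReal_lt_top)]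
  simp_rw [toReal_gammaPDF ha hr, smul_eq_mul, gammaPDFReal_mul_exp hr hl]
  exact (integrable_gammaPDFReal ha (sub_pos.mpr hl)).const_mul _

lemma mgf_id_gammaMeasure {l : ℝ} (ha : 0 < a) (hr : 0 < r) (hl : l < r) :
    mgf id (gammaMeasure a r) l = (r / (r - l)) ^ a := by
  rw [mgf, gammaMeasure, integral_withDensity_eq_integral_toReal_smul
    (measurable_gammaPDF a r) (ae_of_all _ fun _ => ENNReal.ofReal_lt_top)]
  simp_rw [toReal_gammaPDF ha hr, smul_eq_mul, id, gammaPDFReal_mul_exp hr hl]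
  rw [integral_const_mul, integral_gammaPDFReal ha (sub_pos.mpr hl), mul_one]

lemma gammaMeasure_real_Ici_le_exp_neg_sq {k σ : ℝ} (hk : 0 < k) (hσ : 0 ≤ σ) :
    (gammaMeasure k 1).real (Ici (k * (1 + σ + σ ^ 2 / 2))) ≤ exp (-(k * σ ^ 2 / 2)) := by
  have := isProbabilityMeasure_gammaMeasure hk one_pos
  set b := k * (1 + σ + σ ^ 2 / 2)
  set l := σ / (1 + σ)
  have hl : l < 1 := by rw [div_lt_one (by linarith)]; linarith
  have hlog := Real.log_le_sub_inv_div_two (x := 1 + σ) (by linarith)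
  have hexponent : -l * b + k * (((1 + σ) - (1 + σ)⁻¹) / 2) = -(k * σ ^ 2 / 2) := by
    simp only [b, l]
    field_simp
    ring
  calc (gammaMeasure k 1).real (Ici b)
      ≤ exp (-l * b) * mgf id (gammaMeasure k 1) l :=
        measure_ge_le_exp_mul_mgf b (by positivity) (integrable_exp_mul_gammaMeasure hk one_pos hl)
    _ = exp (-l * b + k * log (1 + σ)) := by
        have h1l : 1 / (1 - l) = 1 + σ := by
          simp only [l]
          field_simp
          ring
        rw [mgf_id_gammaMeasure hk one_pos hl, h1l, rpow_def_of_pos (by positivity), exp_add,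
          mul_comm k]
    _ ≤ exp (-(k * σ ^ 2 / 2)) := by
        rw [exp_le_exp, ← hexponent]
        gcongr

lemma gammaMeasure_real_Ici_le_exp_neg {k t : ℝ} (hk : 0 < k) (ht : 0 ≤ t) :
    (gammaMeasure k 1).real (Ici (k + t + √(2 * k * t))) ≤ exp (-t) := by
  set σ := √(2 * t / k)
  have hσ : σ ^ 2 = 2 * t / k := sq_sqrt (by positivity)
  have hkσ : √(2 * k * t) = k * σ := by
    rw [show 2 * k * t = k ^ 2 * (2 * t / k) by field_simp, sqrt_mul (sq_nonneg _), sqrt_sq hk.le]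
  have hb : k + t + √(2 * k * t) = k * (1 + σ + σ ^ 2 / 2) := by
    rw [hkσ, hσ]
    field_simp
    ring
  have ht' : t = k * σ ^ 2 / 2 := by
    rw [hσ]
    field_simp
  rw [hb, ht']
  exact gammaMeasure_real_Ici_le_exp_neg_sq hk (sqrt_nonneg _)

lemma one_sub_exp_neg_le_gammaMeasure_real_Iic {k t : ℝ} (hk : 0 < k) (ht : 0 ≤ t) :
    1 - exp (-t) ≤ (gammaMeasure k 1).real (Iic (k + t + √(2 * k * t))) := by
  have := isProbabilityMeasure_gammaMeasure hk one_pos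
  set b := k + t + √(2 * k * t)
  rw [← compl_Ioi, measureReal_compl measurableSet_Ioi, probReal_univ]
  linarith [measureReal_mono (μ := gammaMeasure k 1) (Ioi_subset_Ici_self (a := b)),
    gammaMeasure_real_Ici_le_exp_neg hk ht]

lemma gammaMeasure_real_Iic {k : ℝ} (hk : 0 < k) (b : ℝ) :
    (gammaMeasure k 1).real (Iic b) = (∫ t in Ioo 0 b, t ^ (k - 1) * exp (-t)) / Gamma k := by
  have := isProbabilityMeasure_gammaMeasure hk one_pos
  have hpdf : gammaPDFReal k 1 = (Ici 0).indicator fun t => t ^ (k - 1) * exp (-t) / Gamma k := by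
    ext t
    by_cases ht : 0 ≤ t
    · simp only [gammaPDFReal, ht, if_true, indicator_of_mem (mem_Ici.mpr ht), one_rpow, one_mul]
      ring
    · simp [gammaPDFReal, ht]
  rw [← cdf_eq_real, cdf_gammaMeasure_eq_integral hk one_pos, hpdf,
    setIntegral_indicator measurableSet_Ici, inter_comm, Ici_inter_Iic,
    integral_Icc_eq_integral_Ioo, integral_div]

end ProbabilityTheory

section RadialIntegrals

variable {E : Type*} [NormedAddCommGroup E] [NormedSpace ℝ E] [FiniteDimensional ℝ E]
  [MeasurableSpace E] [BorelSpace E] [Nontrivial E] (μ : Measure E) [μ.IsAddHaarMeasure]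
  {α : ℝ}

lemma integral_fun_rpow_norm_addHaar (hα : 0 < α) (f : ℝ → ℝ) :
    ∫ x, f (‖x‖ ^ α) ∂μ = (finrank ℝ E / α * μ.real (ball 0 1)) *
      ∫ t in Ioi 0, t ^ (finrank ℝ E / α - 1) * f t := by
  have hsubst : ∫ y in Ioi 0, y ^ (finrank ℝ E - 1) • f (y ^ α)
      = α⁻¹ * ∫ t in Ioi 0, t ^ (finrank ℝ E / α - 1) * f t := by
    rw [← integral_comp_rpow_Ioi (fun t => t ^ (finrank ℝ E / α - 1) * f t) hα.ne',
      ← integral_const_mul]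
    refine setIntegral_congr_fun measurableSet_Ioi fun y (hy : 0 < y) => ?_
    have hpow : y ^ (α - 1) * (y ^ α) ^ (finrank ℝ E / α - 1) = y ^ (finrank ℝ E - 1) := by
      rw [← rpow_mul hy.le, ← rpow_add hy, ← rpow_natCast, Nat.cast_sub finrank_pos,
        Nat.cast_one]
      congr 1
      field_simp
      ring
    rw [smul_eq_mul, smul_eq_mul, abs_of_pos hα, ← hpow]
    field_simp
  rw [integral_fun_norm_addHaar μ (fun r => f (r ^ α)), hsubst, nsmul_eq_mul, smul_eq_mul]
  field_simp

lemma integral_exp_neg_rpow_norm_addHaar (hα : 0 < α) :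
    ∫ x, exp (-‖x‖ ^ α) ∂μ =
      (finrank ℝ E / α * μ.real (ball 0 1)) * Gamma (finrank ℝ E / α) := by
  have : (0 : ℝ) < finrank ℝ E := Nat.cast_pos.mpr finrank_pos
  rw [integral_fun_rpow_norm_addHaar μ hα (fun t => exp (-t)), Gamma_eq_integral (by positivity)]
  simp_rw [mul_comm (exp _)]

lemma setIntegral_ball_exp_neg_rpow_norm_addHaar (hα : 0 < α) {ρ : ℝ} (hρ : 0 ≤ ρ) :
    ∫ x in ball 0 ρ, exp (-‖x‖ ^ α) ∂μ =
      (∫ x, exp (-‖x‖ ^ α) ∂μ) *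
        (gammaMeasure (finrank ℝ E / α) 1).real (Iic (ρ ^ α)) := by
  have hk : (0 : ℝ) < finrank ℝ E / α := div_pos (Nat.cast_pos.mpr finrank_pos) hα
  have hball : (ball (0 : E) ρ).indicator (fun x => exp (-‖x‖ ^ α)) =
      fun x => (Iio (ρ ^ α)).indicator (fun t => exp (-t)) (‖x‖ ^ α) := by
    ext x
    simp only [indicator, mem_ball_zero_iff, mem_Iio, rpow_lt_rpow_iff (norm_nonneg x) hρ hα]
  rw [← integral_indicator measurableSet_ball, hball, integral_fun_rpow_norm_addHaar μ hα,
    integral_exp_neg_rpow_norm_addHaar μ hα, gammaMeasure_real_Iic hk]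
  simp_rw [← indicator_mul_right (Iio _) (fun t : ℝ => t ^ (finrank ℝ E / α - 1))]
  rw [setIntegral_indicator measurableSet_Iio, Ioi_inter_Iio]
  field_simp [(Gamma_pos_of_pos hk).ne']

lemma measureReal_withDensity_exp_neg_rpow_norm_ball (hα : 0 < α) {ρ : ℝ} (hρ : 0 ≤ ρ) :
    (μ.withDensity fun x =>
        ENNReal.ofReal (exp (-‖x‖ ^ α) / ∫ y, exp (-‖y‖ ^ α) ∂μ)).real (ball 0 ρ) =
      (gammaMeasure (finrank ℝ E / α) 1).real (Iic (ρ ^ α)) := by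
  have hZ : 0 < ∫ x, exp (-‖x‖ ^ α) ∂μ := by
    have : (0 : ℝ) < finrank ℝ E := Nat.cast_pos.mpr finrank_pos
    have : 0 < μ.real (ball 0 1) :=
      ENNReal.toReal_pos (measure_ball_pos μ 0 one_pos).ne' measure_ball_lt_top.ne
    rw [integral_exp_neg_rpow_norm_addHaar μ hα]
    positivity
  have hcont : Continuous fun x : E => exp (-‖x‖ ^ α) / ∫ y, exp (-‖y‖ ^ α) ∂μ := by
    fun_prop (disch := positivity)
  have hint := ((hcont.locallyIntegrable (μ := μ)).integrableOn_isCompact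
    (isCompact_closedBall 0 ρ)).mono_set ball_subset_closedBall
  rw [measureReal_withDensity_ofReal measurableSet_ball hint (fun _ _ => by positivity),
    integral_div, setIntegral_ball_exp_neg_rpow_norm_addHaar μ hα hρ,
    mul_div_cancel_left₀ _ hZ.ne']

end RadialIntegrals

/-- For the thin-tailed distribution `Π_α` with density `e^{-‖x‖^α}/Z_α`: the probability
of the ball `B(0,ρ)` equals `P(X ≤ ρ^α)` for `X ∼ Gamma(d/α, 1)`, and with
`τ(s) = (1/α + log(1/s)/d + √(2 log(1/s)/(dα)))^{1/α}` the ball of radius `τ(s)d^{1/α}`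
has probability at least `1 - s` for every `s ∈ (0,1)`. -/
theorem thin_tail_concentration (d : ℕ) (hd : 1 ≤ d) (α : ℝ) (hα : 2 ≤ α)
    (Z : ℝ) (hZ : Z = ∫ x : EuclideanSpace ℝ (Fin d), Real.exp (-‖x‖ ^ α))
    (Pialpha : Measure (EuclideanSpace ℝ (Fin d)))
    (hPi : Pialpha = volume.withDensity fun x => ENNReal.ofReal (Real.exp (-‖x‖ ^ α) / Z)) :
    (∀ ρ : ℝ, 0 < ρ →
      (Pialpha (Metric.ball 0 ρ)).toReal = (gammaMeasure (d / α) 1 (Set.Iic (ρ ^ α))).toReal) ∧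
    (∀ s : ℝ, s ∈ Set.Ioo (0:ℝ) 1 →
      1 - s ≤ (Pialpha (Metric.ball 0
        ((1 / α + Real.log (1 / s) / d + Real.sqrt (2 * Real.log (1 / s) / (d * α)))
          ^ (1 / α) * (d : ℝ) ^ (1 / α)))).toReal) := by
  have hα0 : 0 < α := by linarith
  have hd0 : (0 : ℝ) < d := by exact_mod_cast hd
  have : Nontrivial (EuclideanSpace ℝ (Fin d)) :=
    Module.nontrivial_of_finrank_pos (R := ℝ) (by rw [finrank_euclideanSpace_fin]; omega)
  have hball (ρ : ℝ) (hρ : 0 ≤ ρ) :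
      (Pialpha (ball 0 ρ)).toReal = (gammaMeasure (d / α) 1).real (Iic (ρ ^ α)) := by
    rw [hPi, hZ, ← measureReal_def, measureReal_withDensity_exp_neg_rpow_norm_ball _ hα0 hρ,
      finrank_euclideanSpace_fin]
  refine ⟨fun ρ hρ => hball ρ hρ.le, fun s hs => ?_⟩
  set t := log (1 / s) with ht_def
  have ht : 0 ≤ t := log_nonneg (by rw [le_div_iff₀ hs.1]; linarith [hs.2])
  have hexp : exp (-t) = s := by rw [ht_def, one_div, log_inv, neg_neg, exp_log hs.1]
  have hradius : ((1 / α + t / d + √(2 * t / (d * α))) ^ (1 / α) * (d : ℝ) ^ (1 / α)) ^ α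
      = d / α + t + √(2 * (d / α) * t) := by
    have hsqrt : d * √(2 * t / (d * α)) = √(2 * (d / α) * t) := by
      rw [show 2 * (d / α) * t = (d : ℝ) ^ 2 * (2 * t / (d * α)) by field_simp,
        sqrt_mul (sq_nonneg _), sqrt_sq hd0.le]
    rw [← mul_rpow (by positivity) hd0.le, one_div, rpow_inv_rpow (by positivity) hα0.ne',
      ← hsqrt]
    field_simp
  rw [hball _ (by positivity), hradius, ← hexp]
  exact one_sub_exp_neg_le_gammaMeasure_real_Iic (by positivity) ht
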